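/- Let n ≥ 1 and let Δ ⊂ ℝⁿ be a convex body with nonempty interior. Set σ := min_{x ∈ Δ} p₁(x), S₀ := max_{x ∈ Δ} p₁(x), and a := (σ + S₀)/2. Then there exists a constant C > 0 such that for every integer k ≥ 1 and every s ∈ [a, S₀], one has S₀ − s ≤ C·(1 + #(Δ ∩ {x ∈ ℝⁿ : p₁(x) > s} ∩ ℤⁿ/k))^{1/n} / k. -/

import Mathlib

/-!
Let `p ∈ Δ` attain the maximum `S₀` of the first coordinate and let `Q` be a cube of half-side
`ρ` around an interior point `z`. By convexity, the image of `Q` under the homothety of centre `p`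
and ratio `t` is a cube of half-side `tρ` inside `Δ`, and for `t ≍ S₀ - s` it lies above level
`s`. A cube of half-side `r` contains at least `(kr)ⁿ - 1` points of `ℤⁿ/k`, so
`k t ρ ≤ (1 + N)^{1/n}`, which is the claim. The lower bound `s ≥ (σ + S₀)/2` keeps `t ≤ 1`.
-/

open Set

/-- The rescaled lattice `ℤⁿ/k` inside `ℝⁿ`. -/
def lpts (n k : ℕ) : Set (EuclideanSpace ℝ (Fin n)) :=
  {x | ∀ i, ∃ m : ℤ, (k : ℝ) * x i = (m : ℝ)}

lemma abs_div_sub_le_iff {k : ℝ} (hk : 0 < k) (y a r : ℝ) :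
    |y / k - a| ≤ r ↔ k * (a - r) ≤ y ∧ y ≤ k * (a + r) := by
  rw [abs_le, le_sub_iff_add_le, sub_le_iff_le_add, le_div_iff₀ hk, div_le_iff₀ hk]
  constructor <;> rintro ⟨h₁, h₂⟩ <;> constructor <;> linarith

section

variable {n : ℕ}

def cube (c : EuclideanSpace ℝ (Fin n)) (r : ℝ) : Set (EuclideanSpace ℝ (Fin n)) :=
  {x | ∀ i, |x i - c i| ≤ r}

noncomputable def latticePoint (k : ℕ) (m : Fin n → ℤ) : EuclideanSpace ℝ (Fin n) :=
  WithLp.toLp 2 fun i => (m i : ℝ) / k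

lemma latticePoint_injective {k : ℕ} (hk : 0 < k) :
    Function.Injective (latticePoint (n := n) k) := by
  intro m m' h
  funext i
  have hi := congrArg (fun x : EuclideanSpace ℝ (Fin n) => x i) h
  simp only [latticePoint, PiLp.toLp_apply] at hi
  exact_mod_cast (div_left_inj' (by positivity : (k : ℝ) ≠ 0)).mp hi

lemma cube_inter_lpts_eq_image {k : ℕ} (hk : 0 < k) (c : EuclideanSpace ℝ (Fin n)) (r : ℝ) :
    cube c r ∩ lpts n k = latticePoint k ''
      ↑(Fintype.piFinset fun i => Finset.Icc ⌈k * (c i - r)⌉ ⌊k * (c i + r)⌋) := by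
  have hk' : (0 : ℝ) < k := by exact_mod_cast hk
  ext x
  simp only [cube, lpts, mem_inter_iff, mem_ofPred_eq, Fintype.coe_piFinset, mem_image, mem_pi,
    mem_univ, true_implies, Finset.coe_Icc, mem_Icc, Int.ceil_le, Int.le_floor]
  constructor
  · rintro ⟨hx, hm⟩
    choose m hm using hm
    refine ⟨m, fun i => ?_, ?_⟩
    · rw [← abs_div_sub_le_iff hk', ← hm i, mul_div_cancel_left₀ _ hk'.ne']
      exact hx i
    · ext i
      simp [latticePoint, ← hm i, hk'.ne']
  · rintro ⟨m, hm, rfl⟩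
    refine ⟨fun i => (abs_div_sub_le_iff hk' _ _ _).mpr (hm i), fun i => ⟨m i, ?_⟩⟩
    simp [latticePoint, mul_div_cancel₀ _ hk'.ne']

lemma sub_one_le_card_Icc_ceil_floor (a b : ℝ) :
    b - a - 1 ≤ (Finset.Icc ⌈a⌉ ⌊b⌋).card := by
  rw [Int.card_Icc]
  have h := Int.self_le_toNat (⌊b⌋ + 1 - ⌈a⌉)
  have h' : ((⌊b⌋ + 1 - ⌈a⌉ : ℤ) : ℝ) ≤ (⌊b⌋ + 1 - ⌈a⌉).toNat := by exact_mod_cast h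
  push_cast at h'
  linarith [Int.sub_one_lt_floor b, Int.ceil_lt_add_one a]

lemma pow_le_one_add_ncard_cube_inter_lpts {k : ℕ} (hk : 0 < k) (c : EuclideanSpace ℝ (Fin n))
    {r : ℝ} (hr : 0 ≤ r) : (k * r) ^ n ≤ 1 + (cube c r ∩ lpts n k).ncard := by
  rcases le_or_gt (k * r) 1 with hkr | hkr
  · have := pow_le_one₀ (by positivity) hkr (n := n)
    linarith [(cube c r ∩ lpts n k).ncard.cast_nonneg (α := ℝ)]
  rw [cube_inter_lpts_eq_image hk, ncard_image_of_injective _ (latticePoint_injective hk),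
    ncard_coe_finset, Fintype.card_piFinset, Nat.cast_prod]
  calc (k * r : ℝ) ^ n = ∏ _i : Fin n, (k * r : ℝ) := by simp
    _ ≤ ∏ i, ((Finset.Icc ⌈k * (c i - r)⌉ ⌊k * (c i + r)⌋).card : ℝ) := by
      refine Finset.prod_le_prod (fun _ _ => by positivity) fun i _ => ?_
      linarith [sub_one_le_card_Icc_ceil_floor (k * (c i - r)) (k * (c i + r))]
    _ ≤ _ := le_add_of_nonneg_left zero_le_one

lemma exists_cube_subset_of_mem_interior {s : Set (EuclideanSpace ℝ (Fin n))}
    {z : EuclideanSpace ℝ (Fin n)} (hz : z ∈ interior s) : ∃ ρ > 0, cube z ρ ⊆ s := by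
  set e := PiLp.homeomorph 2 fun _ : Fin n => ℝ
  have hs : e.symm ⁻¹' s ∈ nhds (e z) := e.symm.continuous.continuousAt.preimage_mem_nhds <| by
    simpa using mem_interior_iff_mem_nhds.mp hz
  obtain ⟨ρ, hρ, hball⟩ := Metric.nhds_basis_closedBall.mem_iff.mp hs
  refine ⟨ρ, hρ, fun x hx => ?_⟩
  have hx' : e x ∈ Metric.closedBall (e z) ρ :=
    (dist_pi_le_iff hρ.le).mpr fun i => by rw [Real.dist_eq]; exact hx i
  simpa using hball hx'

lemma Convex.cube_homothety_subset {s : Set (EuclideanSpace ℝ (Fin n))} (hs : Convex ℝ s)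
    {p z : EuclideanSpace ℝ (Fin n)} (hp : p ∈ s) {ρ : ℝ} (hz : cube z ρ ⊆ s) {t : ℝ}
    (ht₀ : 0 < t) (ht₁ : t ≤ 1) : cube ((1 - t) • p + t • z) (t * ρ) ⊆ s := by
  intro x hx
  have hy : t⁻¹ • (x - (1 - t) • p) ∈ cube z ρ := fun i => by
    have := hx i
    simp only [PiLp.add_apply, PiLp.smul_apply, PiLp.sub_apply, smul_eq_mul] at this ⊢
    rw [show t⁻¹ * (x i - (1 - t) * p i) - z i = (x i - ((1 - t) * p i + t * z i)) / t by
      field_simp; ring, abs_div, abs_of_pos ht₀, div_le_iff₀ ht₀]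
    linarith
  have hx' : x = (1 - t) • p + t • t⁻¹ • (x - (1 - t) • p) := by
    rw [smul_inv_smul₀ ht₀.ne']; abel
  rw [hx']
  exact hs hp (hz hy) (by linarith) ht₀.le (by ring)

lemma Bornology.IsBounded.finite_inter_lpts {s : Set (EuclideanSpace ℝ (Fin n))}
    (hs : Bornology.IsBounded s) {k : ℕ} (hk : 0 < k) : (s ∩ lpts n k).Finite := by
  obtain ⟨R, hR⟩ := hs.exists_norm_le
  have hsR : s ⊆ cube 0 R := fun x hx i => by
    simpa using (PiLp.norm_apply_le x i).trans (hR x hx)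
  refine Finite.subset ?_ (inter_subset_inter_left _ hsR)
  rw [cube_inter_lpts_eq_image hk]
  exact (Finset.finite_toSet _).image _

end

theorem stmt11_general (n : ℕ) (hn : 0 < n) (Δ : Set (EuclideanSpace ℝ (Fin n)))
    (hcp : IsCompact Δ) (hcv : Convex ℝ Δ)
    (hint : (interior Δ).Nonempty)
    (σ S₀ : ℝ)
    (hσ : σ = sInf ((fun x : EuclideanSpace ℝ (Fin n) => x ⟨0, hn⟩) '' Δ))
    (hS₀ : S₀ = sSup ((fun x : EuclideanSpace ℝ (Fin n) => x ⟨0, hn⟩) '' Δ)) :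
    ∃ C : ℝ, 0 < C ∧ ∀ k : ℕ, 1 ≤ k → ∀ s : ℝ, (σ + S₀) / 2 ≤ s → s ≤ S₀ →
      S₀ - s ≤ C * ((1 + ((Δ ∩ {x : EuclideanSpace ℝ (Fin n) | s < x ⟨0, hn⟩}
          ∩ lpts n k).ncard : ℝ)) ^ ((1 : ℝ) / n)) / (k : ℝ) := by
  set e : Fin n := ⟨0, hn⟩
  have hK : IsCompact ((fun x : EuclideanSpace ℝ (Fin n) => x e) '' Δ) :=
    hcp.image (PiLp.continuous_apply 2 _ e)
  obtain ⟨z, hz⟩ := hint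
  obtain ⟨ρ, hρ, hzρ⟩ := exists_cube_subset_of_mem_interior hz
  obtain ⟨p, hpΔ, hp⟩ : ∃ p ∈ Δ, p e = S₀ := hS₀ ▸ hK.sSup_mem ⟨_, z, interior_subset hz, rfl⟩
  have hσz : σ ≤ z e := hσ ▸ csInf_le hK.bddBelow ⟨z, interior_subset hz, rfl⟩
  have hzS₀ : z e ≤ S₀ := hS₀ ▸ le_csSup hK.bddAbove ⟨z, interior_subset hz, rfl⟩
  set M := S₀ - σ + ρ
  have hM : 0 < M := by linarith
  refine ⟨2 * M / ρ, by positivity, fun k hk s has hs => ?_⟩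
  rcases hs.eq_or_lt with rfl | hs
  · rw [sub_self]; positivity
  set T := Δ ∩ {x : EuclideanSpace ℝ (Fin n) | s < x e} ∩ lpts n k
  obtain ⟨t, htM⟩ : ∃ t, t * M = (S₀ - s) / 2 := ⟨(S₀ - s) / (2 * M), by field_simp⟩
  have ht₀ : 0 < t := pos_of_mul_pos_left (by linarith) hM.le
  have ht₁ : t ≤ 1 := by nlinarith
  have hcube : cube ((1 - t) • p + t • z) (t * ρ) ⊆ Δ ∩ {x | s < x e} := fun x hx => by
    refine ⟨hcv.cube_homothety_subset hpΔ hzρ ht₀ ht₁ hx, ?_⟩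
    have hxe := (abs_le.mp (hx e)).1
    simp only [PiLp.add_apply, PiLp.smul_apply, smul_eq_mul, hp] at hxe
    show s < x e
    nlinarith [mul_le_mul_of_nonneg_left hσz ht₀.le]
  have hcount : ((k : ℝ) * (t * ρ)) ^ n ≤ 1 + T.ncard :=
    (pow_le_one_add_ncard_cube_inter_lpts hk _ (by positivity)).trans <| by
      gcongr 1 + (?_ : ℕ)
      exact ncard_le_ncard (inter_subset_inter_left _ hcube)
        ((hcp.isBounded.subset inter_subset_left).finite_inter_lpts hk)
  have hroot : (k : ℝ) * (t * ρ) ≤ (1 + T.ncard) ^ ((1 : ℝ) / n) := by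
    rw [one_div, Real.le_rpow_inv_iff_of_pos (by positivity) (by positivity) (by positivity)]
    exact_mod_cast hcount
  have hk' : (0 : ℝ) < k := by exact_mod_cast hk
  calc S₀ - s = 2 * M / ρ * ((k : ℝ) * (t * ρ)) / k := by field_simp; linarith
    _ ≤ _ := by gcongr

theorem stmt11 (n : ℕ) (hn : 0 < n) (Δ : Set (EuclideanSpace ℝ (Fin n)))
    (hne : Δ.Nonempty) (hcp : IsCompact Δ) (hcv : Convex ℝ Δ)
    (hint : (interior Δ).Nonempty)
    (σ S₀ : ℝ)
    (hσ : σ = sInf ((fun x : EuclideanSpace ℝ (Fin n) => x ⟨0, hn⟩) '' Δ))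
    (hS₀ : S₀ = sSup ((fun x : EuclideanSpace ℝ (Fin n) => x ⟨0, hn⟩) '' Δ)) :
    ∃ C : ℝ, 0 < C ∧ ∀ k : ℕ, 1 ≤ k → ∀ s : ℝ, (σ + S₀) / 2 ≤ s → s ≤ S₀ →
      S₀ - s ≤ C * ((1 + ((Δ ∩ {x : EuclideanSpace ℝ (Fin n) | s < x ⟨0, hn⟩}
          ∩ lpts n k).ncard : ℝ)) ^ ((1 : ℝ) / n)) / (k : ℝ) :=
  stmt11_general n hn Δ hcp hcv hint σ S₀ hσ hS₀
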